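/- Let K ≥ 1, let z ~ N(0, I_K) and let μ ∈ ℝ^K. Then for every k ∈ {1, …, K}, P[argmax(z + μ) = k] = ∫_ℝ φ(t) ∏_{j ≠ k} Φ(t + μ_k − μ_j) dt, where φ and Φ are the standard Gaussian density and cumulative distribution function, respectively. -/

import Mathlib

/-!
Split off the `k`-th coordinate. By Fubini for the product measure, once `z k = t` is fixed the
event `argmax(z + μ) = k` is the box `∏_{j ≠ k} (-∞, t + μ k - μ j)` in the other coordinates,
of Gaussian measure `∏_{j ≠ k} Φ(t + μ k - μ j)`; integrating over `t` against the density `φ`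
of `z k` gives the formula.
-/

open MeasureTheory ProbabilityTheory

/-- The law of `K` independent standard Gaussian random variables, `N(0, I_K)`. -/
noncomputable def stdGaussianPi (K : ℕ) : Measure (Fin K → ℝ) :=
  Measure.pi fun _ => gaussianReal 0 1

/-- The event `{z : argmax(z + μ) = k}`. -/
def argmaxEvent {K : ℕ} (μ : Fin K → ℝ) (k : Fin K) : Set (Fin K → ℝ) :=
  {z | ∀ j, j ≠ k → z j + μ j < z k + μ k}

/-- The standard Gaussian density `φ(t) = (2π)^{-1/2} exp(−t²/2)`. -/
noncomputable def stdNormalPDF (t : ℝ) : ℝ :=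
  (Real.sqrt (2 * Real.pi))⁻¹ * Real.exp (-t ^ 2 / 2)

/-- The standard Gaussian CDF `Φ(t) = ∫_{−∞}^t φ(s) ds`. -/
noncomputable def stdNormalCDF (t : ℝ) : ℝ :=
  ∫ s in Set.Iic t, stdNormalPDF s

open Finset

lemma Fin.prod_erase_eq_prod_succAbove {M : Type*} [CommMonoid M] {n : ℕ} (f : Fin (n + 1) → M)
    (k : Fin (n + 1)) : ∏ j ∈ univ.erase k, f j = ∏ j, f (k.succAbove j) := by
  rw [← compl_singleton, ← Fin.image_succAbove_univ,
    prod_image fun _ _ _ _ h => Fin.succAbove_right_injective h]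

namespace MeasureTheory.Measure

variable {n : ℕ} (ν : Fin (n + 1) → Measure ℝ) (k : Fin (n + 1)) (c : Fin (n + 1) → ℝ)

theorem pi_setOf_forall_ne_lt_add [∀ i, SigmaFinite (ν i)] :
    Measure.pi ν {z | ∀ j ≠ k, z j < z k + c j} =
      ∫⁻ t, ∏ j ∈ univ.erase k, ν j (Set.Iio (t + c j)) ∂ν k := by
  set S : Set (ℝ × (Fin n → ℝ)) := {p | ∀ j, p.2 j < p.1 + c (k.succAbove j)}
  have hS : MeasurableSet S := by
    simp only [S, Set.ofPred_forall]
    exact MeasurableSet.iInter fun j => measurableSet_lt (by fun_prop) (by fun_prop)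
  have hsplit : {z : Fin (n + 1) → ℝ | ∀ j ≠ k, z j < z k + c j} =
      MeasurableEquiv.piFinSuccAbove (fun _ => ℝ) k ⁻¹' S := by
    ext z
    simp [S, Fin.forall_iff_succAbove k, Fin.removeNth]
  have hsection (t : ℝ) :
      Prod.mk t ⁻¹' S = Set.univ.pi fun j => Set.Iio (t + c (k.succAbove j)) := by
    ext w
    simp [S]
  rw [hsplit, (measurePreserving_piFinSuccAbove ν k).measure_preimage hS.nullMeasurableSet,
    prod_apply hS]
  simp only [hsection, pi_pi, Fin.prod_erase_eq_prod_succAbove]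

theorem toReal_pi_setOf_forall_ne_lt_add [∀ i, IsProbabilityMeasure (ν i)] :
    (Measure.pi ν {z | ∀ j ≠ k, z j < z k + c j}).toReal =
      ∫ t, ∏ j ∈ univ.erase k, (ν j (Set.Iio (t + c j))).toReal ∂ν k := by
  rw [pi_setOf_forall_ne_lt_add, ← integral_toReal]
  · simp only [ENNReal.toReal_prod]
  · refine (Finset.measurable_prod _ fun j _ => Monotone.measurable ?_).aemeasurable
    exact fun a b hab => measure_mono (Set.Iio_subset_Iio (by linarith))
  · exact ae_of_all _ fun t => ENNReal.prod_lt_top fun j _ => measure_lt_top _ _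

end MeasureTheory.Measure

lemma stdNormalPDF_eq_gaussianPDFReal : stdNormalPDF = gaussianPDFReal 0 1 := by
  ext t
  simp [stdNormalPDF, gaussianPDFReal]

lemma stdNormalCDF_eq_gaussianReal_Iio (t : ℝ) :
    stdNormalCDF t = (gaussianReal 0 1 (Set.Iio t)).toReal := by
  rw [gaussianReal_apply_eq_integral 0 one_ne_zero,
    ENNReal.toReal_ofReal (integral_nonneg fun x => gaussianPDFReal_nonneg 0 1 x),
    stdNormalCDF, integral_Iic_eq_integral_Iio, stdNormalPDF_eq_gaussianPDFReal]

lemma integral_gaussianReal_eq_integral_stdNormalPDF_mul (f : ℝ → ℝ) :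
    ∫ t, f t ∂gaussianReal 0 1 = ∫ t, stdNormalPDF t * f t := by
  simp [integral_gaussianReal_eq_integral_smul one_ne_zero, stdNormalPDF_eq_gaussianPDFReal]

lemma argmaxEvent_eq_setOf_forall_ne_lt_add {K : ℕ} (μ : Fin K → ℝ) (k : Fin K) :
    argmaxEvent μ k = {z | ∀ j ≠ k, z j < z k + (μ k - μ j)} := by
  ext z
  refine forall₂_congr fun j _ => ?_
  constructor <;> intro h <;> linarith

theorem gaussianMax_prob_eq_integral_general (K : ℕ) (μ : Fin K → ℝ) (k : Fin K) :
    (stdGaussianPi K (argmaxEvent μ k)).toReal =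
      ∫ t : ℝ, stdNormalPDF t * ∏ j ∈ Finset.univ.erase k, stdNormalCDF (t + μ k - μ j) := by
  obtain ⟨n, rfl⟩ : ∃ n, K = n + 1 := Nat.exists_eq_add_one_of_ne_zero k.pos.ne'
  rw [stdGaussianPi, argmaxEvent_eq_setOf_forall_ne_lt_add,
    Measure.toReal_pi_setOf_forall_ne_lt_add, integral_gaussianReal_eq_integral_stdNormalPDF_mul]
  simp only [stdNormalCDF_eq_gaussianReal_Iio, add_sub_assoc]

/-- For `z ~ N(0, I_K)` and `μ ∈ ℝ^K`,
`P[argmax(z + μ) = k] = ∫_ℝ φ(t) ∏_{j ≠ k} Φ(t + μ_k − μ_j) dt`. -/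
theorem gaussianMax_prob_eq_integral (K : ℕ) (hK : 1 ≤ K) (μ : Fin K → ℝ) (k : Fin K) :
    (stdGaussianPi K (argmaxEvent μ k)).toReal =
      ∫ t : ℝ, stdNormalPDF t * ∏ j ∈ Finset.univ.erase k, stdNormalCDF (t + μ k - μ j) :=
  gaussianMax_prob_eq_integral_general K μ k
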